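/- arXiv:1910.03210 — 7 statements merged into one kernel-verified Lean document; each statement's English description precedes it below -/
import Mathlib

section
/- For every integer N ≥ 1, the N-th order approximated Hilbert curve h_N is a bijection from {0,1,...,4^N−1} onto the grid {0,1,...,2^N−1} × {0,1,...,2^N−1}. -/
/-- The `N`-th order approximated Hilbert curve, mapping indices `{0,...,4^N-1}`
to nodes of the grid `{0,...,2^N-1} × {0,...,2^N-1} ⊆ ℤ × ℤ`. -/
def hilbert : ℕ → ℕ → ℤ × ℤ
  | 0, _ => (0, 0)
  | 1, i =>
    if i = 0 then (0, 0)
    else if i = 1 then (0, 1)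
    else if i = 2 then (1, 1)
    else (1, 0)
  | N + 2, i =>
    let q := i / 4 ^ (N + 1)
    let s : ℤ := 2 ^ (N + 1)
    let p := hilbert (N + 1) (i % 4 ^ (N + 1))
    if q = 0 then (p.2, p.1)
    else if q = 1 then (p.1, p.2 + s)
    else if q = 2 then (p.1 + s, p.2 + s)
    else (2 * s - 1 - p.2, s - 1 - p.1)

/-- Euclidean distance between two points of `ℤ × ℤ`. -/
noncomputable def euclDist (a b : ℤ × ℤ) : ℝ :=
  Real.sqrt (((a.1 - b.1 : ℤ) : ℝ) ^ 2 + ((a.2 - b.2 : ℤ) : ℝ) ^ 2)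

/-- Two points of `ℤ × ℤ` are edge connected if their Euclidean distance equals 1. -/
def EdgeConnected (a b : ℤ × ℤ) : Prop := euclDist a b = 1

/-- Two points of `ℤ × ℤ` are vertex connected if both coordinates differ by exactly 1. -/
def VertexConnected (a b : ℤ × ℤ) : Prop := |a.1 - b.1| = 1 ∧ |a.2 - b.2| = 1

/-- Membership in the grid `{0,...,2^N-1} × {0,...,2^N-1}`. -/
def InGrid (N : ℕ) (p : ℤ × ℤ) : Prop :=
  0 ≤ p.1 ∧ p.1 ≤ 2 ^ N - 1 ∧ 0 ≤ p.2 ∧ p.2 ≤ 2 ^ N - 1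

/-- The closed segment from `u` to `v` (centres of cells, viewed in `ℝ²`) is disjoint
from the open unit cell centred at `c`. -/
def SegAvoidsCell (u v c : ℤ × ℤ) : Prop :=
  ∀ t : ℝ, t ∈ Set.Icc (0 : ℝ) 1 →
    ¬ (|(1 - t) * (u.1 : ℝ) + t * (v.1 : ℝ) - (c.1 : ℝ)| < 1 / 2 ∧
       |(1 - t) * (u.2 : ℝ) + t * (v.2 : ℝ) - (c.2 : ℝ)| < 1 / 2)

/-- An evasion tour for the blocked index set `B` on the `N`-th order Hilbert grid:
a sequence of waypoints `w 0, ..., w m` in the grid, starting at the entry node,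
ending at the exit node, avoiding all blocked nodes, covering every unblocked grid
point, and whose straight-line segments avoid the interiors of all blocked cells. -/
def IsEvasionTour (N : ℕ) (B : Finset ℕ) (m : ℕ) (w : ℕ → ℤ × ℤ) : Prop :=
  w 0 = hilbert N 0 ∧
  w m = hilbert N (4 ^ N - 1) ∧
  (∀ j ≤ m, InGrid N (w j)) ∧
  (∀ j ≤ m, ∀ b ∈ B, w j ≠ hilbert N b) ∧
  (∀ p : ℤ × ℤ, InGrid N p → (∀ b ∈ B, p ≠ hilbert N b) → ∃ j ≤ m, w j = p) ∧
  (∀ j < m, ∀ b ∈ B, SegAvoidsCell (w j) (w (j + 1)) (hilbert N b))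

/-!
Cut the index range into four blocks of length `4 ^ N` and the grid `[0, 2 ^ (N + 1))²` into
four quadrants of side `2 ^ N`. Then `hilbert (N + 1)` factors as `i ↦ (i / 4 ^ N, i % 4 ^ N)`
(a bijection onto block number × offset), followed by `hilbert N` on the offset (a bijection
by induction), followed by the affine map sending the `2 ^ N`-square onto the quadrant of the
block (an isometry of the square composed with a translation).
-/

open Set

def hilbertQuadrant (s : ℤ) (q : ℕ) (p : ℤ × ℤ) : ℤ × ℤ :=
  if q = 0 then (p.2, p.1)
  else if q = 1 then (p.1, p.2 + s)
  else if q = 2 then (p.1 + s, p.2 + s)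
  else (2 * s - 1 - p.2, s - 1 - p.1)

-- The hard-coded `hilbert 1` is the recursion step applied to `hilbert 0`, so the recursion
-- holds from `N = 0` on.
theorem hilbert_succ (N i : ℕ) :
    hilbert (N + 1) i = hilbertQuadrant (2 ^ N) (i / 4 ^ N) (hilbert N (i % 4 ^ N)) := by
  cases N with
  | zero => simp only [hilbert, hilbertQuadrant]; split_ifs <;> simp_all
  | succ N => rfl

theorem setOf_inGrid (N : ℕ) :
    {p : ℤ × ℤ | InGrid N p} = Ico 0 (2 ^ N) ×ˢ Ico 0 (2 ^ N) := by
  ext ⟨x, y⟩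
  simp only [InGrid, mem_ofPred_eq, mem_prod, mem_Ico]
  omega

theorem bijOn_divMod (a b : ℕ) :
    BijOn (fun i => (i / b, i % b)) (Iio (a * b)) (Iio a ×ˢ Iio b) := by
  refine ⟨fun i hi => ?_, fun i _ j _ hij => ?_, fun ⟨q, r⟩ ⟨hq, hr⟩ => ?_⟩
  · have hb : 0 < b := Nat.pos_of_ne_zero (by rintro rfl; simp at hi)
    exact ⟨Nat.div_lt_of_lt_mul (by rwa [mul_comm] at hi), Nat.mod_lt i hb⟩
  · simp only [Prod.mk.injEq] at hij
    rw [← Nat.div_add_mod i b, ← Nat.div_add_mod j b, hij.1, hij.2]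
  · simp only [mem_Iio] at hq hr
    have hb : 0 < b := by omega
    refine ⟨b * q + r, ?_, ?_⟩
    · simp only [mem_Iio]; nlinarith
    · simp [Nat.mul_add_div hb, Nat.div_eq_of_lt hr, Nat.mod_eq_of_lt hr]

theorem bijOn_hilbertQuadrant (s : ℤ) :
    BijOn (Function.uncurry (hilbertQuadrant s)) (Iio 4 ×ˢ (Ico 0 s ×ˢ Ico 0 s))
      (Ico 0 (2 * s) ×ˢ Ico 0 (2 * s)) := by
  refine ⟨?_, ?_, ?_⟩
  · rintro ⟨q, x, y⟩ ⟨hq, hx, hy⟩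
    simp only [mem_Iio, mem_Ico] at hq hx hy
    interval_cases q <;>
      simp only [hilbertQuadrant, Function.uncurry, mem_prod, mem_Ico, Nat.reduceEqDiff,
        reduceIte] <;> omega
  · rintro ⟨q, x, y⟩ ⟨hq, hx, hy⟩ ⟨q', x', y'⟩ ⟨hq', hx', hy'⟩ h
    simp only [mem_Iio, mem_Ico] at hq hx hy hq' hx' hy'
    interval_cases q <;> interval_cases q' <;>
      simp only [hilbertQuadrant, Function.uncurry, Prod.mk.injEq, Nat.reduceEqDiff,
        true_and, reduceIte] at h ⊢ <;> omega
  · rintro ⟨x, y⟩ ⟨hx, hy⟩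
    simp only [mem_Ico] at hx hy
    obtain ⟨q, p, hq, hp, hqp⟩ :
        ∃ q p, q < 4 ∧ p ∈ Ico 0 s ×ˢ Ico 0 s ∧ hilbertQuadrant s q p = (x, y) := by
      rcases lt_or_ge x s with hxs | hxs <;> rcases lt_or_ge y s with hys | hys
      · exact ⟨0, (y, x), by simp [hilbertQuadrant]; omega⟩
      · exact ⟨1, (x, y - s), by simp [hilbertQuadrant]; omega⟩
      · exact ⟨3, (s - 1 - y, 2 * s - 1 - x), by simp [hilbertQuadrant]; omega⟩
      · exact ⟨2, (x - s, y - s), by simp [hilbertQuadrant]; omega⟩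
    exact ⟨(q, p), ⟨hq, hp⟩, hqp⟩

theorem hilbert_bijOn_general (N : ℕ) :
    Set.BijOn (hilbert N) (Set.Iio (4 ^ N)) {p : ℤ × ℤ | InGrid N p} := by
  rw [setOf_inGrid]
  induction N with
  | zero =>
    have hpoint : Ico (0 : ℤ) 1 = {0} := by ext; simp; omega
    simp [hilbert, hpoint, Iio]
  | succ N ih =>
    have hfactor : hilbert (N + 1) = Function.uncurry (hilbertQuadrant (2 ^ N)) ∘
        Prod.map id (hilbert N) ∘ fun i => (i / 4 ^ N, i % 4 ^ N) :=
      funext (hilbert_succ N)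
    rw [hfactor, pow_succ', pow_succ']
    exact (bijOn_hilbertQuadrant _).comp (((bijOn_id _).prodMap ih).comp (bijOn_divMod 4 _))

theorem hilbert_bijOn (N : ℕ) (hN : 1 ≤ N) :
    Set.BijOn (hilbert N) (Set.Iio (4 ^ N)) {p : ℤ × ℤ | InGrid N p} :=
  hilbert_bijOn_general N
end

section
/- For every integer N ≥ 1 and every index i with 0 ≤ i < 4^N−2, the nodes h_N(i) and h_N(i+2) are never edge connected, i.e., their Euclidean distance is not equal to 1. -/
/-! Colour `ℤ × ℤ` like a chessboard by the parity of `x + y`. Each of the four quarters of the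
recursion preserves the colour of a node relative to the parity of its index: the offsets `2 ^ N`
are even, and the reflection used in the last quarter changes `x + y` by an even amount. So
`hilbert N i` has the colour of `i`, and `hilbert N i`, `hilbert N (i + 2)` have the same colour,
whereas edge-connected points have different colours. -/

def coordSum (p : ℤ × ℤ) : ℤ := p.1 + p.2

lemma EdgeConnected.odd_coordSum_sub {a b : ℤ × ℤ} (h : EdgeConnected a b) :
    Odd (coordSum a - coordSum b) := by
  have hsq : (a.1 - b.1) ^ 2 + (a.2 - b.2) ^ 2 = 1 := by
    rw [EdgeConnected, euclDist, Real.sqrt_eq_one] at h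
    exact_mod_cast h
  have hparity : Even (coordSum a - coordSum b) ↔ Even ((a.1 - b.1) ^ 2 + (a.2 - b.2) ^ 2) := by
    rw [show coordSum a - coordSum b = (a.1 - b.1) + (a.2 - b.2) by unfold coordSum; ring]
    simp [Int.even_add, Int.even_pow]
  rw [← Int.not_even_iff_odd, hparity, hsq]
  decide

lemma coordSum_hilbert_succ_succ_emod_two (N i : ℕ) :
    coordSum (hilbert (N + 2) i) % 2 = coordSum (hilbert (N + 1) (i % 4 ^ (N + 1))) % 2 := by
  obtain ⟨k, hk⟩ : Even ((2 : ℤ) ^ (N + 1)) := even_two.pow_of_ne_zero N.succ_ne_zero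
  simp only [coordSum, hilbert]
  split_ifs <;> omega

lemma coordSum_hilbert_emod_two : ∀ (N i : ℕ), i < 4 ^ N → coordSum (hilbert N i) % 2 = i % 2
  | 0, i, hi => by
    obtain rfl : i = 0 := by simpa using hi
    rfl
  | 1, i, hi => by
    interval_cases i <;> rfl
  | N + 2, i, _ => by
    have h2_dvd : 2 ∣ 4 ^ (N + 1) := dvd_pow (by norm_num) N.succ_ne_zero
    rw [coordSum_hilbert_succ_succ_emod_two,
      coordSum_hilbert_emod_two (N + 1) _ (Nat.mod_lt _ (by positivity))]
    exact_mod_cast congrArg Nat.cast (Nat.mod_mod_of_dvd i h2_dvd)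

theorem hilbert_dist_two_not_edgeConnected_general (N i : ℕ) (hi : i < 4 ^ N - 2) :
    ¬ EdgeConnected (hilbert N i) (hilbert N (i + 2)) := by
  intro h
  have h₀ := coordSum_hilbert_emod_two N i (by omega)
  have h₂ := coordSum_hilbert_emod_two N (i + 2) (by omega)
  have hodd := Int.odd_iff.mp h.odd_coordSum_sub
  push_cast at h₂
  omega

theorem hilbert_dist_two_not_edgeConnected (N i : ℕ) (hN : 1 ≤ N) (hi : i < 4 ^ N - 2) :
    ¬ EdgeConnected (hilbert N i) (hilbert N (i + 2)) :=
  hilbert_dist_two_not_edgeConnected_general N i hi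
end

section
/- If N ≥ 1 and i is an index with 0 ≤ i, i+3 ≤ 4^N−1 and i mod 4 = 1, then i+3 lies in the first-order subcurve following that of i (⌊(i+3)/4⌋ = ⌊i/4⌋ + 1), i is a non-corner node, i+3 is a corner node, and the nodes h_N(i) and h_N(i+3) are not edge connected. -/
lemma hilbert_zero : ∀ N, hilbert N 0 = (0, 0) := by
  intro N
  induction N with
  | zero => rfl
  | succ n ih =>
    match n, ih with
    | 0, _ => rfl
    | n + 1, ih =>
      simp only [hilbert, Nat.zero_div, Nat.zero_mod, ih]
      norm_num

lemma hilbert_last3 : ∀ M, 1 ≤ M → hilbert M (4 ^ M - 3) = (2 ^ M - 2, 1) := by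
  intro M
  induction M with
  | zero => omega
  | succ n ih =>
    match n, ih with
    | 0, _ => intro _; rfl
    | n + 1, ih =>
      intro _
      have h4 : (4:ℕ) ^ (n + 2) = 4 * 4 ^ (n + 1) := by ring
      have hp : (4:ℕ) ^ (n + 1) ≥ 4 := Nat.le_self_pow (by omega) 4
      have hq : (4 ^ (n + 2) - 3) / 4 ^ (n + 1) = 3 := by
        rw [h4]
        rw [show 4 * 4 ^ (n + 1) - 3 = 4 ^ (n + 1) * 3 + (4 ^ (n+1) - 3) by omega]
        rw [Nat.mul_add_div (by omega)]
        rw [Nat.div_eq_of_lt (by omega)]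
      have hr : (4 ^ (n + 2) - 3) % 4 ^ (n + 1) = 4 ^ (n + 1) - 3 := by
        rw [h4, show 4 * 4 ^ (n + 1) - 3 = 4 ^ (n + 1) * 3 + (4 ^ (n+1) - 3) by omega,
          Nat.mul_add_mod, Nat.mod_eq_of_lt (by omega)]
      simp only [hilbert, hq, hr, ih (by omega)]
      norm_num [Prod.ext_iff]
      ring

lemma hilbert_dist : ∀ N, 1 ≤ N → ∀ i, i % 4 = 1 → i + 3 < 4 ^ N →
    ((hilbert N i).1 - (hilbert N (i + 3)).1) ^ 2 +
      ((hilbert N i).2 - (hilbert N (i + 3)).2) ^ 2 = 5 := by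
  intro N hN
  induction N, hN using Nat.le_induction with
  | base => intro i h1 h2; omega
  | succ N hN ih =>
    obtain ⟨K, rfl⟩ : ∃ K, N = K + 1 := ⟨N - 1, by omega⟩
    intro i hmod hlt
    set t := 4 ^ (K + 1) with ht
    have ht4 : 4 ≤ t := Nat.le_self_pow (by omega) 4
    have hdvd : (4 : ℕ) ∣ t := dvd_pow_self 4 (Nat.succ_ne_zero K)
    have ht0 : t % 4 = 0 := by omega
    have hrmod : i % t % 4 = 1 := by rw [Nat.mod_mod_of_dvd i hdvd]; exact hmod
    have hrlt : i % t < t := Nat.mod_lt _ (by omega)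
    have hlt' : i + 3 < 4 * t := by
      have : (4 : ℕ) ^ (K + 1 + 1) = 4 * t := by rw [ht]; ring
      omega
    have hqd : i = t * (i / t) + i % t := (Nat.div_add_mod i t).symm
    have hqlt : i / t < 4 := Nat.div_lt_of_lt_mul (by omega)
    by_cases hcase : i % t + 3 < t
    · -- same quadrant
      have hdiv3 : (i + 3) / t = i / t := by
        conv_lhs => rw [show i + 3 = t * (i / t) + (i % t + 3) by omega]
        rw [Nat.mul_add_div (by omega), Nat.div_eq_of_lt hcase, Nat.add_zero]
      have hmod3 : (i + 3) % t = i % t + 3 := by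
        conv_lhs => rw [show i + 3 = t * (i / t) + (i % t + 3) by omega]
        rw [Nat.mul_add_mod, Nat.mod_eq_of_lt hcase]
      have key := ih (i % t) hrmod (by omega)
      simp only [hilbert, ← ht, hdiv3, hmod3]
      set p := hilbert (K + 1) (i % t)
      set p' := hilbert (K + 1) (i % t + 3)
      have : i / t = 0 ∨ i / t = 1 ∨ i / t = 2 ∨ i / t = 3 := by
        revert hqlt; generalize i / t = q; intro h; omega
      rcases this with h | h | h | h <;> simp only [h] <;> norm_num <;>
        linear_combination key
    · -- crossing quadrants
      have hrt : i % t = t - 3 := by omega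
      have hqlt2 : i / t < 3 := by
        by_contra hcon
        have h3 : i / t = 3 := by clear hqd hrt; omega
        rw [h3] at hqd; omega
      have hdiv3 : (i + 3) / t = i / t + 1 := by
        rw [show i + 3 = t * (i / t + 1) by rw [Nat.mul_add, Nat.mul_one]; omega]
        exact Nat.mul_div_cancel_left _ (by omega)
      have hmod3 : (i + 3) % t = 0 := by
        rw [show i + 3 = t * (i / t + 1) by rw [Nat.mul_add, Nat.mul_one]; omega]
        exact Nat.mul_mod_right t _
      have hE : hilbert (K + 1) (i % t) = (2 ^ (K + 1) - 2, 1) := by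
        rw [hrt, ht]; exact hilbert_last3 (K + 1) (by omega)
      have hZ := hilbert_zero (K + 1)
      simp only [hilbert, ← ht, hdiv3, hmod3, hE, hZ]
      have : i / t = 0 ∨ i / t = 1 ∨ i / t = 2 := by
        revert hqlt2; generalize i / t = q; intro h; omega
      rcases this with h | h | h <;> simp only [h] <;> norm_num <;> ring

theorem hilbert_mod4_one_plus_three (N i : ℕ) (hN : 1 ≤ N) (hi : i + 3 ≤ 4 ^ N - 1)
    (hmod : i % 4 = 1) :
    (i + 3) / 4 = i / 4 + 1 ∧
    i % 4 ∉ ({0, 3} : Set ℕ) ∧ (i + 3) % 4 ∈ ({0, 3} : Set ℕ) ∧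
    ¬ EdgeConnected (hilbert N i) (hilbert N (i + 3)) := by
  have h4N : (4 : ℕ) ^ 1 ≤ 4 ^ N := Nat.pow_le_pow_right (by omega) hN
  have hlt : i + 3 < 4 ^ N := by omega
  refine ⟨by omega, by simp [hmod], ?_, ?_⟩
  · have : (i + 3) % 4 = 0 := by omega
    simp [this]
  · intro h
    have key := hilbert_dist N hN i hmod hlt
    unfold EdgeConnected euclDist at h
    have h5 : ((((hilbert N i).1 - (hilbert N (i + 3)).1 : ℤ) : ℝ) ^ 2 +
        (((hilbert N i).2 - (hilbert N (i + 3)).2 : ℤ) : ℝ) ^ 2) = 5 := by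
      have := congrArg (fun z : ℤ => (z : ℝ)) key
      push_cast at this ⊢
      linarith [this]
    rw [h5] at h
    have := Real.sqrt_eq_one.mp h
    norm_num at this
end

section
/- If N ≥ 1 and i is an index with 0 ≤ i, i+3 ≤ 4^N−1 and i mod 4 = 3, then i+3 lies in the first-order subcurve following that of i (⌊(i+3)/4⌋ = ⌊i/4⌋ + 1), i is a corner node, i+3 is a non-corner node, and the nodes h_N(i) and h_N(i+3) are not edge connected. -/
lemma hilbert_step (K q r : ℕ) (hr : r < 4 ^ (K + 1)) :
    hilbert (K + 2) (q * 4 ^ (K + 1) + r) =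
      (if q = 0 then ((hilbert (K+1) r).2, (hilbert (K+1) r).1)
       else if q = 1 then ((hilbert (K+1) r).1, (hilbert (K+1) r).2 + 2 ^ (K+1))
       else if q = 2 then ((hilbert (K+1) r).1 + 2 ^ (K+1), (hilbert (K+1) r).2 + 2 ^ (K+1))
       else (2 * 2 ^ (K+1) - 1 - (hilbert (K+1) r).2, (2:ℤ) ^ (K+1) - 1 - (hilbert (K+1) r).1)) := by
  have hpos : 0 < 4 ^ (K + 1) := by positivity
  have hdiv : (q * 4 ^ (K + 1) + r) / 4 ^ (K + 1) = q := by
    rw [mul_comm, Nat.mul_add_div hpos, Nat.div_eq_of_lt hr, add_zero]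
  have hmod : (q * 4 ^ (K + 1) + r) % 4 ^ (K + 1) = r := by
    rw [mul_comm, Nat.mul_add_mod, Nat.mod_eq_of_lt hr]
  simp only [hilbert, hdiv, hmod]

lemma hilbert_two : ∀ K, hilbert (K + 1) 2 = (1, 1)
  | 0 => by norm_num [hilbert]
  | K + 1 => by
    have h2 : (2 : ℕ) = 0 * 4 ^ (K + 1) + 2 := by ring
    have hlt : (2:ℕ) < 4 ^ (K + 1) := by
      calc (2:ℕ) < 4 ^ 1 := by norm_num
      _ ≤ 4 ^ (K+1) := Nat.pow_le_pow_right (by norm_num) (by omega)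
    rw [h2, hilbert_step K 0 2 hlt, hilbert_two K]
    norm_num

lemma hilbert_last : ∀ K, hilbert (K + 1) (4 ^ (K + 1) - 1) = (2 ^ (K + 1) - 1, 0)
  | 0 => by norm_num [hilbert]
  | K + 1 => by
    have hpos : 0 < 4 ^ (K + 1) := by positivity
    have h4 : (4:ℕ) ^ (K + 2) = 4 * 4 ^ (K + 1) := by ring
    have h2 : 4 ^ (K + 2) - 1 = 3 * 4 ^ (K + 1) + (4 ^ (K + 1) - 1) := by omega
    rw [h2, hilbert_step K 3 (4 ^ (K+1) - 1) (by omega), hilbert_last K]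
    have : ((2:ℤ)) ^ (K + 2) = 2 * 2 ^ (K + 1) := by ring
    norm_num [this]

lemma hilbert_dist5 : ∀ M i, i % 4 = 3 → i + 3 ≤ 4 ^ M - 1 →
    ((hilbert M i).1 - (hilbert M (i+3)).1) ^ 2 +
    ((hilbert M i).2 - (hilbert M (i+3)).2) ^ 2 = 5
  | 0, i => by intro _ h; norm_num at h
  | 1, i => by intro h1 h2; norm_num at h2; omega
  | K + 2, i => by
    intro h1 h2
    have hpos : 0 < 4 ^ (K + 1) := by positivity
    have hm4 : 4 ^ (K + 1) % 4 = 0 := by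
      have : (4:ℕ) ^ (K+1) = 4 * 4 ^ K := by ring
      omega
    have h4 : (4:ℕ) ^ (K + 2) = 4 * 4 ^ (K + 1) := by ring
    set m := 4 ^ (K + 1) with hmdef
    set q := i / m with hq
    set r := i % m with hr
    have hrm : r < m := Nat.mod_lt _ hpos
    have hiqr : i = q * m + r := by
      rw [hq, hr, mul_comm]; exact (Nat.div_add_mod i m).symm
    have hr4 : r % 4 = 3 := by
      rw [hr, Nat.mod_mod_of_dvd _ (dvd_pow_self 4 (Nat.succ_ne_zero K)), h1]
    by_cases hc : r + 3 < m
    · -- same quadrant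
      have hi3 : i + 3 = q * m + (r + 3) := by omega
      have IH := hilbert_dist5 (K + 1) r hr4 (by omega)
      rw [hi3, hiqr, hilbert_step K q r hrm, hilbert_step K q (r+3) hc]
      split_ifs with e0 e1 e2
      · linear_combination IH
      · linear_combination IH
      · linear_combination IH
      · linear_combination IH
    · -- straddle: r = m - 1
      have hrval : r = m - 1 := by omega
      have hq2 : q ≤ 2 := by
        by_contra hq3
        have : 3 * m ≤ q * m := Nat.mul_le_mul_right m (by omega)
        omega
      have hi3 : i + 3 = (q + 1) * m + 2 := by
        have : (q+1)*m = q*m + m := by ring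
        omega
      have h2lt : (2:ℕ) < m := by
        have : (4:ℕ)^1 ≤ 4 ^ (K+1) := Nat.pow_le_pow_right (by norm_num) (by omega)
        omega
      rw [hi3, hiqr, hrval, hilbert_step K q (m-1) (by omega),
        hilbert_step K (q+1) 2 h2lt, hilbert_last K, hilbert_two K]
      interval_cases q <;> norm_num <;> ring

theorem hilbert_mod4_three_plus_three (N i : ℕ) (hN : 1 ≤ N) (hi : i + 3 ≤ 4 ^ N - 1)
    (hmod : i % 4 = 3) :
    (i + 3) / 4 = i / 4 + 1 ∧
    i % 4 ∈ ({0, 3} : Set ℕ) ∧ (i + 3) % 4 ∉ ({0, 3} : Set ℕ) ∧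
    ¬ EdgeConnected (hilbert N i) (hilbert N (i + 3)) := by
  refine ⟨by omega, by simp [hmod], by simp; omega, ?_⟩
  intro h
  have key := hilbert_dist5 N i hmod hi
  set a := hilbert N i
  set b := hilbert N (i + 3)
  have h5 : ((a.1 - b.1 : ℤ) : ℝ) ^ 2 + ((a.2 - b.2 : ℤ) : ℝ) ^ 2 = 5 := by
    push_cast
    exact_mod_cast congrArg (fun z : ℤ => (z : ℝ)) key
  have := h
  unfold EdgeConnected euclDist at this
  rw [h5] at this
  have h51 : (5:ℝ) = 1 := by
    have := congrArg (fun x : ℝ => x ^ 2) this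
    simpa [Real.sq_sqrt (by norm_num : (5:ℝ) ≥ 0)] using this
  norm_num at h51
end

section
/- If N ≥ 1 and i is a non-corner node index (i mod 4 ∈ {1,2}, so automatically 1 ≤ i ≤ 4^N−2), then the nodes h_N(i−1) and h_N(i+1) are vertex connected, i.e., their Euclidean distance equals √2; hence a blocked non-corner node can be evaded by going directly from the preceding to the following node. -/
/-! Each quarter of the Hilbert curve of order `N + 2` is the curve of order `N + 1` moved by an
isometry of `ℤ × ℤ` (a reflection in a diagonal, a translation, or both), and isometries preserve
vertex connectedness. Since `4 ∣ 4 ^ (N + 1)`, a non-corner index `i` lies in the same quarter as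
`i - 1` and `i + 1`, with relative position again a non-corner index; so the claim follows by
induction on the order, starting from the two non-corner indices of `h_1`. -/

def hilbertQuarter (s : ℤ) (q : ℕ) (p : ℤ × ℤ) : ℤ × ℤ :=
  if q = 0 then (p.2, p.1)
  else if q = 1 then (p.1, p.2 + s)
  else if q = 2 then (p.1 + s, p.2 + s)
  else (2 * s - 1 - p.2, s - 1 - p.1)

lemma hilbert_add_two (N i : ℕ) :
    hilbert (N + 2) i =
      hilbertQuarter (2 ^ (N + 1)) (i / 4 ^ (N + 1)) (hilbert (N + 1) (i % 4 ^ (N + 1))) :=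
  rfl

lemma VertexConnected.hilbertQuarter {a b : ℤ × ℤ} (h : VertexConnected a b) (s : ℤ) (q : ℕ) :
    VertexConnected (hilbertQuarter s q a) (hilbertQuarter s q b) := by
  obtain ⟨h1, h2⟩ := h
  unfold _root_.hilbertQuarter VertexConnected
  split_ifs
  · exact ⟨h2, h1⟩
  · simpa using ⟨h1, h2⟩
  · simpa using ⟨h1, h2⟩
  · simpa [abs_sub_comm] using ⟨h2, h1⟩

lemma euclDist_eq_sqrt_two_of_vertexConnected {a b : ℤ × ℤ} (h : VertexConnected a b) :
    euclDist a b = Real.sqrt 2 := by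
  have hsq : ∀ x : ℤ, |x| = 1 → (x : ℝ) ^ 2 = 1 := fun x hx => by
    rw [← sq_abs, ← Int.cast_abs, hx]; norm_num
  rw [euclDist, hsq _ h.1, hsq _ h.2]
  norm_num

section NonCorner

variable {M i : ℕ} (hM : 4 ∣ M) (hi : i % 4 = 1 ∨ i % 4 = 2)
include hM hi

lemma succ_div_mod_eq_of_noncorner : (i + 1) / M = i / M ∧ (i + 1) % M = i % M + 1 := by
  rcases Nat.eq_zero_or_pos M with rfl | hM0
  · simp
  have := Nat.div_add_mod i M
  have := Nat.mod_lt i hM0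
  have : i % M % 4 = i % 4 := Nat.mod_mod_of_dvd i hM
  exact (Nat.div_mod_unique hM0).2 ⟨by omega, by omega⟩

lemma pred_div_mod_eq_of_noncorner : (i - 1) / M = i / M ∧ (i - 1) % M = i % M - 1 := by
  rcases Nat.eq_zero_or_pos M with rfl | hM0
  · simp
  have := Nat.div_add_mod i M
  have := Nat.mod_lt i hM0
  have : i % M % 4 = i % 4 := Nat.mod_mod_of_dvd i hM
  exact (Nat.div_mod_unique hM0).2 ⟨by omega, by omega⟩

end NonCorner

lemma hilbert_vertexConnected_of_noncorner (N i : ℕ) (hi : i < 4 ^ (N + 1))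
    (hmod : i % 4 = 1 ∨ i % 4 = 2) :
    VertexConnected (hilbert (N + 1) (i - 1)) (hilbert (N + 1) (i + 1)) := by
  induction N generalizing i with
  | zero =>
    obtain rfl | rfl : i = 1 ∨ i = 2 := by omega
    all_goals simp [hilbert, VertexConnected]
  | succ n ih =>
    have h4 : 4 ∣ 4 ^ (n + 1) := dvd_pow_self 4 n.succ_ne_zero
    obtain ⟨hq_pred, hr_pred⟩ := pred_div_mod_eq_of_noncorner h4 hmod
    obtain ⟨hq_succ, hr_succ⟩ := succ_div_mod_eq_of_noncorner h4 hmod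
    have hr : i % 4 ^ (n + 1) % 4 = i % 4 := Nat.mod_mod_of_dvd i h4
    rw [hilbert_add_two, hilbert_add_two, hq_pred, hr_pred, hq_succ, hr_succ]
    exact (ih _ (Nat.mod_lt _ (by positivity)) (hr ▸ hmod)).hilbertQuarter _ _

theorem hilbert_noncorner_neighbours_vertexConnected_general (N i : ℕ)
    (hi : i < 4 ^ N) (hmod : i % 4 = 1 ∨ i % 4 = 2) :
    1 ≤ i ∧ i ≤ 4 ^ N - 2 ∧
    VertexConnected (hilbert N (i - 1)) (hilbert N (i + 1)) ∧
    euclDist (hilbert N (i - 1)) (hilbert N (i + 1)) = Real.sqrt 2 := by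
  obtain _ | n := N
  · omega
  have h4 : 4 ∣ 4 ^ (n + 1) := dvd_pow_self 4 n.succ_ne_zero
  have hvc := hilbert_vertexConnected_of_noncorner n i hi hmod
  exact ⟨by omega, by omega, hvc, euclDist_eq_sqrt_two_of_vertexConnected hvc⟩

theorem hilbert_noncorner_neighbours_vertexConnected (N i : ℕ) (hN : 1 ≤ N)
    (hi : i < 4 ^ N) (hmod : i % 4 = 1 ∨ i % 4 = 2) :
    1 ≤ i ∧ i ≤ 4 ^ N - 2 ∧
    VertexConnected (hilbert N (i - 1)) (hilbert N (i + 1)) ∧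
    euclDist (hilbert N (i - 1)) (hilbert N (i + 1)) = Real.sqrt 2 :=
  hilbert_noncorner_neighbours_vertexConnected_general N i hi hmod
end

section
/- Validity of the odd straight-node evasion strategy: if N ≥ 1 and i is a straight index with i odd and 1 ≤ i ≤ 4^N−2, then i−3 ≥ 0 and the node h_N(i−3) is vertex connected to both h_N(i−1) and h_N(i+1); hence a blocked node at index i can be evaded by the detour h_N(i−1) → h_N(i−3) → h_N(i+1). -/
def stepU (a b : ℤ × ℤ) : Prop :=
  ((a = (0,1) ∨ a = (0,-1)) ∧ (b = (1,0) ∨ b = (-1,0))) ∨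
  ((a = (1,0) ∨ a = (-1,0)) ∧ (b = (0,1) ∨ b = (0,-1)))

lemma stepU_swap {a b : ℤ × ℤ} (h : stepU a b) : stepU (a.2, a.1) (b.2, b.1) := by
  rcases h with ⟨ha | ha, hb | hb⟩ | ⟨ha | ha, hb | hb⟩ <;> subst ha <;> subst hb <;> simp [stepU]

lemma stepU_negswap {a b : ℤ × ℤ} (h : stepU a b) : stepU (-a.2, -a.1) (-b.2, -b.1) := by
  rcases h with ⟨ha | ha, hb | hb⟩ | ⟨ha | ha, hb | hb⟩ <;> subst ha <;> subst hb <;> simp [stepU]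

lemma hilbert_succ_s12 (n i : ℕ) : hilbert (n+2) i =
    (let q := i / 4^(n+1); let s : ℤ := 2^(n+1); let p := hilbert (n+1) (i % 4^(n+1));
     if q = 0 then (p.2,p.1) else if q = 1 then (p.1, p.2+s)
     else if q = 2 then (p.1+s,p.2+s) else (2*s-1-p.2, s-1-p.1)) := rfl

lemma hilbert_block (n : ℕ) : ∀ k, 4*k+3 ≤ 4^(n+1) - 1 →
    ∃ a b : ℤ × ℤ, stepU a b ∧
      hilbert (n+1) (4*k+1) = hilbert (n+1) (4*k) + a ∧
      hilbert (n+1) (4*k+2) = hilbert (n+1) (4*k) + a + b ∧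
      hilbert (n+1) (4*k+3) = hilbert (n+1) (4*k) + b := by
  induction n with
  | zero =>
    intro k hk
    have : k = 0 := by simpa using hk
    subst this
    exact ⟨(0,1), (1,0), by simp [stepU], by decide, by decide, by decide⟩
  | succ n ih =>
    intro k hk
    set M := 4^(n+1) with hM
    have hMpos : 0 < M := pow_pos (by norm_num) _
    have hM4 : 4^(n+2) = 4 * M := by rw [hM]; ring
    set q := k / 4^n with hq
    set e := k % 4^n with he
    have hke : k = 4^n * q + e := (Nat.div_add_mod k (4^n)).symm
    have hee : e < 4^n := Nat.mod_lt _ (pow_pos (by norm_num) _)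
    have hsplit : ∀ j, 4*k + j = M * q + (4*e + j) := by
      intro j; rw [hM, hke]; ring
    have hmod : ∀ j, j ≤ 3 → (4*k + j) % M = 4*e + j := by
      intro j hj
      rw [hsplit j, Nat.mul_add_mod, Nat.mod_eq_of_lt (by rw [hM, pow_succ]; omega)]
    have hdiv : ∀ j, j ≤ 3 → (4*k + j) / M = q := by
      intro j hj
      rw [hsplit j, Nat.mul_add_div hMpos, Nat.div_eq_of_lt (by rw [hM, pow_succ]; omega)]
      omega
    have hq3 : q ≤ 3 := by
      have hP : 4^(n+2) = 16 * 4^n := by ring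
      have hPpos : 0 < 4^n := pow_pos (by norm_num) n
      have hklt : k < 4 * 4^n := by omega
      have := (Nat.div_lt_iff_lt_mul hPpos).mpr hklt
      omega
    obtain ⟨a, b, hU, e1, e2, e3⟩ := ih e (by rw [hM] at *; omega)
    have h0' := hmod 0 (by norm_num)
    have h1' := hmod 1 (by norm_num)
    have h2' := hmod 2 (by norm_num)
    have h3' := hmod 3 (by norm_num)
    simp only [Nat.add_zero] at h0'
    have hrw : ∀ j, j ≤ 3 → hilbert (n+2) (4*k+j) =
        (let s : ℤ := 2^(n+1); let p := hilbert (n+1) (4*e+j);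
         if q = 0 then (p.2,p.1) else if q = 1 then (p.1, p.2+s)
         else if q = 2 then (p.1+s,p.2+s) else (2*s-1-p.2, s-1-p.1)) := by
      intro j hj
      rw [hilbert_succ_s12, ← hM, hdiv j hj, hmod j hj]
    have g0 := hrw 0 (by norm_num)
    have g1 := hrw 1 (by norm_num)
    have g2 := hrw 2 (by norm_num)
    have g3 := hrw 3 (by norm_num)
    simp only [Nat.add_zero] at g0
    set p := hilbert (n+1) (4*e) with hp
    interval_cases q <;> simp only [if_true, if_false, reduceIte] at g0 g1 g2 g3
    · exact ⟨(a.2,a.1),(b.2,b.1), stepU_swap hU, by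
        rw [g1, g0, e1]; rfl, by rw [g2, g0, e2]; rfl, by rw [g3, g0, e3]; rfl⟩
    · exact ⟨a, b, hU, by
        rw [g1, g0, e1]; refine Prod.ext_iff.mpr ⟨?_, ?_⟩ <;> simp <;> ring_nf, by
        rw [g2, g0, e2]; refine Prod.ext_iff.mpr ⟨?_, ?_⟩ <;> simp <;> ring_nf, by
        rw [g3, g0, e3]; refine Prod.ext_iff.mpr ⟨?_, ?_⟩ <;> simp <;> ring_nf⟩
    · exact ⟨a, b, hU, by
        rw [g1, g0, e1]; refine Prod.ext_iff.mpr ⟨?_, ?_⟩ <;> simp <;> ring_nf, by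
        rw [g2, g0, e2]; refine Prod.ext_iff.mpr ⟨?_, ?_⟩ <;> simp <;> ring_nf, by
        rw [g3, g0, e3]; refine Prod.ext_iff.mpr ⟨?_, ?_⟩ <;> simp <;> ring_nf⟩
    · exact ⟨(-a.2,-a.1),(-b.2,-b.1), stepU_negswap hU, by
        rw [g1, g0, e1]; refine Prod.ext_iff.mpr ⟨?_, ?_⟩ <;> simp <;> ring_nf, by
        rw [g2, g0, e2]; refine Prod.ext_iff.mpr ⟨?_, ?_⟩ <;> simp <;> ring_nf, by
        rw [g3, g0, e3]; refine Prod.ext_iff.mpr ⟨?_, ?_⟩ <;> simp <;> ring_nf⟩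

lemma stepU_ne {a b : ℤ × ℤ} (h : stepU a b) : b ≠ a := by
  rcases h with ⟨ha|ha, hb|hb⟩ | ⟨ha|ha, hb|hb⟩ <;> subst ha <;> subst hb <;> decide

lemma vc_of (p d : ℤ × ℤ) (h1 : |d.1| = 1) (h2 : |d.2| = 1) :
    VertexConnected p (p + d) := by
  constructor
  · have h : p.1 - (p + d).1 = -d.1 := by simp
    rw [h, abs_neg, h1]
  · have h : p.2 - (p + d).2 = -d.2 := by simp
    rw [h, abs_neg, h2]

lemma stepU_abs_add {a b : ℤ × ℤ} (h : stepU a b) : |(a+b).1| = 1 ∧ |(a+b).2| = 1 := by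
  rcases h with ⟨ha|ha, hb|hb⟩ | ⟨ha|ha, hb|hb⟩ <;> subst ha <;> subst hb <;> decide

lemma stepU_abs_sub {a b : ℤ × ℤ} (h : stepU a b) : |(b-a).1| = 1 ∧ |(b-a).2| = 1 := by
  rcases h with ⟨ha|ha, hb|hb⟩ | ⟨ha|ha, hb|hb⟩ <;> subst ha <;> subst hb <;> decide

theorem hilbert_straight_odd_evasion (N i : ℕ) (hN : 1 ≤ N) (h1 : 1 ≤ i)
    (h2 : i ≤ 4 ^ N - 2) (hodd : i % 2 = 1)
    (hstraight : hilbert N (i + 1) - hilbert N i = hilbert N i - hilbert N (i - 1)) :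
    3 ≤ i ∧
    VertexConnected (hilbert N (i - 3)) (hilbert N (i - 1)) ∧
    VertexConnected (hilbert N (i - 3)) (hilbert N (i + 1)) := by
  obtain ⟨n, rfl⟩ : ∃ n, N = n + 1 := ⟨N - 1, by omega⟩
  have hp4 : 0 < 4^n := pow_pos (by norm_num) n
  have hps : 4^(n+1) = 4 * 4^n := by ring
  have hc : i % 4 = 1 ∨ i % 4 = 3 := by omega
  rcases hc with hc | hc
  · exfalso
    set k := i / 4 with hk
    have hik : i = 4*k + 1 := by omega
    obtain ⟨a, b, hU, e1, e2, e3⟩ := hilbert_block n k (by omega)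
    rw [show i - 1 = 4*k by omega, show i + 1 = 4*k+2 by omega,
        show i = 4*k+1 by omega, e1, e2] at hstraight
    exact stepU_ne hU (by linear_combination hstraight)
  · set k := i / 4 with hk
    have hik : i = 4*k + 3 := by omega
    obtain ⟨a, b, hU, e1, e2, e3⟩ := hilbert_block n k (by omega)
    rw [show i - 1 = 4*k+2 by omega, show i = 4*k+3 by omega, e3, e2] at hstraight
    have h4 : hilbert (n+1) (4*k+3+1) = hilbert (n+1) (4*k) + (b - a) := by
      linear_combination hstraight
    refine ⟨by omega, ?_, ?_⟩
    · rw [show i - 3 = 4*k by omega, show i - 1 = 4*k+2 by omega, e2, add_assoc]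
      exact vc_of _ _ (stepU_abs_add hU).1 (stepU_abs_add hU).2
    · rw [show i - 3 = 4*k by omega, show i + 1 = 4*k+3+1 by omega, h4]
      exact vc_of _ _ (stepU_abs_sub hU).1 (stepU_abs_sub hU).2
end

section
/- Evasion of two blocked corner nodes of the same first-order subcurve: for every N ≥ 2 and every blocked set B = {n_1, n_2} with 1 ≤ n_1, n_2 = n_1 + 3 ≤ 4^N−2, and n_1 mod 4 = 0 (so n_1 and n_2 are the entry and exit corner nodes of a single first-order subcurve), an evasion tour exists. -/
open Set

lemma hilbert_add_two_s17 {N q r : ℕ} (hr : r < 4 ^ (N + 1)) {x y : ℤ}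
    (hxy : hilbert (N + 1) r = (x, y)) :
    hilbert (N + 2) (4 ^ (N + 1) * q + r) =
      if q = 0 then (y, x)
      else if q = 1 then (x, y + 2 ^ (N + 1))
      else if q = 2 then (x + 2 ^ (N + 1), y + 2 ^ (N + 1))
      else (2 * 2 ^ (N + 1) - 1 - y, 2 ^ (N + 1) - 1 - x) := by
  have he : 0 < 4 ^ (N + 1) := by positivity
  simp only [hilbert, Nat.mul_add_div he, Nat.div_eq_of_lt hr, Nat.mul_add_mod, Nat.mod_eq_of_lt hr,
    add_zero, hxy]

lemma exists_eq_quadrant {e i : ℕ} (hi : i < 4 * e) : ∃ q r, q < 4 ∧ r < e ∧ i = e * q + r :=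
  ⟨i / e, i % e, by rw [Nat.div_lt_iff_lt_mul (by omega)]; lia, Nat.mod_lt _ (by omega),
    (Nat.div_add_mod _ _).symm⟩

lemma inGrid_hilbert : ∀ N i, InGrid N (hilbert N i)
  | 0, _ => by simp [hilbert, InGrid]
  | 1, i => by unfold hilbert InGrid; split_ifs <;> norm_num
  | N + 2, i => by
    obtain ⟨h1, h2, h3, h4⟩ := inGrid_hilbert (N + 1) (i % 4 ^ (N + 1))
    have hs : (2 : ℤ) ^ (N + 2) = 2 * 2 ^ (N + 1) := by ring
    unfold hilbert InGrid
    dsimp only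
    rw [hs]
    split_ifs <;> omega

theorem hilbert_injOn : ∀ N, InjOn (hilbert N) (Iio (4 ^ N))
  | 0 => by simp [InjOn]
  | 1 => by
    simp only [InjOn, mem_Iio]
    intro i hi j hj
    interval_cases i <;> interval_cases j <;> simp [hilbert]
  | N + 2 => by
    intro i hi j hj hij
    rw [mem_Iio, pow_succ' 4 (N + 1)] at hi hj
    obtain ⟨q, r, hq, hr, rfl⟩ := exists_eq_quadrant hi
    obtain ⟨q', r', hq', hr', rfl⟩ := exists_eq_quadrant hj
    have IH := @hilbert_injOn (N + 1) r hr r' hr'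
    obtain ⟨a1, a2, a3, a4⟩ := inGrid_hilbert (N + 1) r
    obtain ⟨b1, b2, b3, b4⟩ := inGrid_hilbert (N + 1) r'
    rw [hilbert_add_two_s17 hr rfl, hilbert_add_two_s17 hr' rfl] at hij
    have hpos : (0 : ℤ) < 2 ^ (N + 1) := by positivity
    -- the quadrant of a node is read off from which half each coordinate lies in
    split_ifs at hij <;> simp only [Prod.mk.injEq] at hij <;>
      first
      | omega
      | (obtain rfl : q = q' := by omega
         rw [IH (Prod.ext (by omega) (by omega))])

theorem hilbert_corner_collinear : ∀ N k, 4 * k + 3 < 4 ^ N →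
    (hilbert N (4 * k)).1 = (hilbert N (4 * k + 3)).1 ∨
      (hilbert N (4 * k)).2 = (hilbert N (4 * k + 3)).2
  | 0, _, h => by simp at h
  | 1, k, h => by
    obtain rfl : k = 0 := by omega
    simp [hilbert]
  | N + 2, k, h => by
    have h4 : 4 ^ (N + 1) = 4 * 4 ^ N := pow_succ' 4 N
    have h4' : 4 ^ (N + 2) = 4 * 4 ^ (N + 1) := pow_succ' 4 (N + 1)
    obtain ⟨q, k', -, hk', rfl⟩ := exists_eq_quadrant (e := 4 ^ N) (i := k) (by omega)
    have e0 : 4 * (4 ^ N * q + k') = 4 ^ (N + 1) * q + 4 * k' := by rw [h4]; ring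
    have e3 : 4 * (4 ^ N * q + k') + 3 = 4 ^ (N + 1) * q + (4 * k' + 3) := by rw [h4]; ring
    have IH := hilbert_corner_collinear (N + 1) k' (by omega)
    rw [e3, e0, hilbert_add_two_s17 (by omega) rfl, hilbert_add_two_s17 (by omega) rfl]
    -- each quadrant map acts on the two coordinates separately, up to swapping them
    split_ifs <;> simp only [add_left_inj, sub_right_inj] <;> tauto

lemma time_bounds_of_abs_lerp_sub_lt_half {a b e : ℤ} {t : ℝ} (ht : t ∈ Icc (0 : ℝ) 1)
    (hab : |a - b| ≤ 1)
    (h : |(1 - t) * a + t * b - e| < 1 / 2) : (a ≠ e → 1 / 2 < t) ∧ (b ≠ e → t < 1 / 2) := by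
  obtain ⟨ht0, ht1⟩ := ht
  obtain ⟨h1, h2⟩ := abs_lt.mp h
  rw [abs_le] at hab
  have ht1' : 0 ≤ 1 - t := sub_nonneg.2 ht1
  constructor <;> intro hne <;> rcases hne.lt_or_gt with hlt | hlt
  · have hA : (a : ℝ) + 1 ≤ e := by exact_mod_cast (show a + 1 ≤ e by omega)
    have hB : (b : ℝ) ≤ e := by exact_mod_cast (show b ≤ e by omega)
    nlinarith [mul_nonneg ht1' (sub_nonneg.2 hA), mul_nonneg ht0 (sub_nonneg.2 hB)]
  · have hA : (e : ℝ) + 1 ≤ a := by exact_mod_cast (show e + 1 ≤ a by omega)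
    have hB : (e : ℝ) ≤ b := by exact_mod_cast (show e ≤ b by omega)
    nlinarith [mul_nonneg ht1' (sub_nonneg.2 hA), mul_nonneg ht0 (sub_nonneg.2 hB)]
  · have hB : (b : ℝ) + 1 ≤ e := by exact_mod_cast (show b + 1 ≤ e by omega)
    have hA : (a : ℝ) ≤ e := by exact_mod_cast (show a ≤ e by omega)
    nlinarith [mul_nonneg ht1' (sub_nonneg.2 hA), mul_nonneg ht0 (sub_nonneg.2 hB)]
  · have hB : (e : ℝ) + 1 ≤ b := by exact_mod_cast (show e + 1 ≤ b by omega)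
    have hA : (e : ℝ) ≤ a := by exact_mod_cast (show e ≤ a by omega)
    nlinarith [mul_nonneg ht1' (sub_nonneg.2 hA), mul_nonneg ht0 (sub_nonneg.2 hB)]

theorem segAvoidsCell_of_king {u v c : ℤ × ℤ} (h1 : |u.1 - v.1| ≤ 1) (h2 : |u.2 - v.2| ≤ 1)
    (hu : u ≠ c) (hv : v ≠ c) : SegAvoidsCell u v c := by
  rintro t ht ⟨hx, hy⟩
  have hx := time_bounds_of_abs_lerp_sub_lt_half ht h1 hx
  have hy := time_bounds_of_abs_lerp_sub_lt_half ht h2 hy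
  have hu' : u.1 ≠ c.1 ∨ u.2 ≠ c.2 := by contrapose! hu; exact Prod.ext hu.1 hu.2
  have hv' : v.1 ≠ c.1 ∨ v.2 ≠ c.2 := by contrapose! hv; exact Prod.ext hv.1 hv.2
  have : 1 / 2 < t := hu'.elim hx.1 hy.1
  have : t < 1 / 2 := hv'.elim hx.2 hy.2
  linarith

namespace SimpleGraph

variable {V : Type*} {G : SimpleGraph V}

theorem reachable_of_adj_succ {f : ℤ → V} {a b : ℤ} (h : ∀ k ∈ Ico a b, G.Adj (f k) (f (k + 1)))
    {i j : ℤ} (hi : i ∈ Icc a b) (hj : j ∈ Icc a b) : G.Reachable (f i) (f j) := by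
  suffices H : ∀ i ∈ Icc a b, G.Reachable (f a) (f i) from (H i hi).symm.trans (H j hj)
  rintro i ⟨hai, hib⟩
  induction i, hai using Int.leInduction with
  | base => rfl
  | succ k hak ih => exact (ih (by omega)).trans (h k ⟨hak, by omega⟩).reachable

theorem exists_walk_forall_mem_support {S : Set V} (hS : S.Finite) {u v : V}
    (huv : G.Reachable u v) (huS : ∀ x ∈ S, G.Reachable u x) :
    ∃ p : G.Walk u v, ∀ x ∈ S, x ∈ p.support := by
  induction S, hS using Set.Finite.induction_on with
  | empty => exact ⟨huv.some, by simp⟩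
  | @insert x S _ _ ih =>
    obtain ⟨p, hp⟩ := ih fun y hy => huS y (mem_insert_of_mem x hy)
    obtain ⟨q⟩ := huS x (mem_insert x S)
    refine ⟨q.append (q.reverse.append p), ?_⟩
    rintro y (rfl | hy)
    · simp
    · simp [hp y hy]

end SimpleGraph

def gridGraphOn (U : Set (ℤ × ℤ)) : SimpleGraph (ℤ × ℤ) where
  Adj p q := p ∈ U ∧ q ∈ U ∧ |p.1 - q.1| + |p.2 - q.2| = 1
  symm := ⟨fun p q h => ⟨h.2.1, h.1, by rw [abs_sub_comm q.1, abs_sub_comm q.2]; exact h.2.2⟩⟩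
  loopless := ⟨fun p h => by simp at h⟩

@[simp]
theorem gridGraphOn_adj {U : Set (ℤ × ℤ)} {p q : ℤ × ℤ} :
    (gridGraphOn U).Adj p q ↔ p ∈ U ∧ q ∈ U ∧ |p.1 - q.1| + |p.2 - q.2| = 1 :=
  Iff.rfl

def box (n : ℤ) : Set (ℤ × ℤ) := Icc 0 (n - 1) ×ˢ Icc 0 (n - 1)

def IsFreeRow (U : Set (ℤ × ℤ)) (n y : ℤ) : Prop := ∀ x ∈ Icc 0 (n - 1), (x, y) ∈ U

def IsFreeCol (U : Set (ℤ × ℤ)) (n x : ℤ) : Prop := ∀ y ∈ Icc 0 (n - 1), (x, y) ∈ U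

section Grid

variable {U : Set (ℤ × ℤ)} {n : ℤ}

theorem IsFreeRow.reachable {y : ℤ} (h : IsFreeRow U n y) {x x' : ℤ} (hx : x ∈ Icc 0 (n - 1))
    (hx' : x' ∈ Icc 0 (n - 1)) : (gridGraphOn U).Reachable (x, y) (x', y) :=
  SimpleGraph.reachable_of_adj_succ (f := fun k => (k, y))
    (fun k hk => gridGraphOn_adj.2 ⟨h k (Ico_subset_Icc_self hk),
      h (k + 1) ⟨by linarith [hk.1], Int.add_one_le_of_lt hk.2⟩, by simp⟩) hx hx'

theorem IsFreeCol.reachable {x : ℤ} (h : IsFreeCol U n x) {y y' : ℤ} (hy : y ∈ Icc 0 (n - 1))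
    (hy' : y' ∈ Icc 0 (n - 1)) : (gridGraphOn U).Reachable (x, y) (x, y') :=
  SimpleGraph.reachable_of_adj_succ (f := fun k => (x, k))
    (fun k hk => gridGraphOn_adj.2 ⟨h k (Ico_subset_Icc_self hk),
      h (k + 1) ⟨by linarith [hk.1], Int.add_one_le_of_lt hk.2⟩, by simp⟩) hy hy'

theorem gridGraphOn_reachable_of_free_lines (hU : U ⊆ box n) {x₀ y₀ : ℤ}
    (hrow : IsFreeRow U n y₀) (hcol : IsFreeCol U n x₀)
    (hlines : ∀ p ∈ U, IsFreeRow U n p.2 ∨ IsFreeCol U n p.1) {p q : ℤ × ℤ}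
    (hp : p ∈ U) (hq : q ∈ U) : (gridGraphOn U).Reachable p q := by
  suffices H : ∀ p ∈ U, (gridGraphOn U).Reachable p (x₀, y₀) from (H p hp).trans (H q hq).symm
  intro p hp
  obtain ⟨hp1, hp2⟩ := hU hp
  have hx₀ : x₀ ∈ Icc 0 (n - 1) := (hU (hcol p.2 hp2)).1
  have hy₀ : y₀ ∈ Icc 0 (n - 1) := (hU (hrow p.1 hp1)).2
  rcases hlines p hp with h | h
  · exact (h.reachable hp1 hx₀).trans (hcol.reachable hp2 hy₀)
  · exact (h.reachable hp2 hy₀).trans (hrow.reachable hp1 hx₀)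

theorem isFreeRow_or_isFreeCol_of_collinear {c d p : ℤ × ℤ} (hcd : c.1 = d.1 ∨ c.2 = d.2)
    (hp : p ∈ box n \ {c, d}) :
    IsFreeRow (box n \ {c, d}) n p.2 ∨ IsFreeCol (box n \ {c, d}) n p.1 := by
  obtain ⟨⟨hp1, hp2⟩, hpcd⟩ := hp
  by_contra! h
  simp only [IsFreeRow, IsFreeCol, not_forall] at h
  obtain ⟨⟨x, hx, hxrow⟩, ⟨y, hy, hycol⟩⟩ := h
  simp only [mem_sdiff, mem_insert_iff, mem_singleton_iff, box, mem_prod, not_and, not_not]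
    at hxrow hycol hpcd
  have hrow := hxrow ⟨hx, hp2⟩
  have hcol := hycol ⟨hp1, hy⟩
  simp only [Prod.ext_iff] at hrow hcol hpcd
  omega

lemma exists_mem_Icc_ne_ne (hn : 3 ≤ n) (a b : ℤ) : ∃ z ∈ Icc 0 (n - 1), z ≠ a ∧ z ≠ b := by
  by_cases h0 : a ≠ 0 ∧ b ≠ 0
  · exact ⟨0, ⟨le_rfl, by omega⟩, h0.1.symm, h0.2.symm⟩
  by_cases h1 : a ≠ 1 ∧ b ≠ 1
  · exact ⟨1, ⟨by omega, by omega⟩, h1.1.symm, h1.2.symm⟩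
  exact ⟨2, ⟨by omega, by omega⟩, by omega, by omega⟩

theorem exists_isFreeRow (hn : 3 ≤ n) (c d : ℤ × ℤ) : ∃ y, IsFreeRow (box n \ {c, d}) n y := by
  obtain ⟨y, hy, hyc, hyd⟩ := exists_mem_Icc_ne_ne hn c.2 d.2
  refine ⟨y, fun x hx => ⟨⟨hx, hy⟩, ?_⟩⟩
  rintro (rfl | rfl) <;> simp at hyc hyd

theorem exists_isFreeCol (hn : 3 ≤ n) (c d : ℤ × ℤ) : ∃ x, IsFreeCol (box n \ {c, d}) n x := by
  obtain ⟨x, hx, hxc, hxd⟩ := exists_mem_Icc_ne_ne hn c.1 d.1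
  refine ⟨x, fun y hy => ⟨⟨hx, hy⟩, ?_⟩⟩
  rintro (rfl | rfl) <;> simp at hxc hxd

theorem gridGraphOn_box_diff_pair_reachable (hn : 3 ≤ n) {c d p q : ℤ × ℤ}
    (hcd : c.1 = d.1 ∨ c.2 = d.2) (hp : p ∈ box n \ {c, d}) (hq : q ∈ box n \ {c, d}) :
    (gridGraphOn (box n \ {c, d})).Reachable p q := by
  obtain ⟨y, hy⟩ := exists_isFreeRow hn c d
  obtain ⟨x, hx⟩ := exists_isFreeCol hn c d
  exact gridGraphOn_reachable_of_free_lines sdiff_subset hy hx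
    (fun _ hp => isFreeRow_or_isFreeCol_of_collinear hcd hp) hp hq

end Grid

def freeCells (N : ℕ) (B : Finset ℕ) : Set (ℤ × ℤ) :=
  {p | InGrid N p ∧ ∀ b ∈ B, p ≠ hilbert N b}

theorem isEvasionTour_of_walk {N : ℕ} {B : Finset ℕ}
    (w : (gridGraphOn (freeCells N B)).Walk (hilbert N 0) (hilbert N (4 ^ N - 1)))
    (hend : hilbert N (4 ^ N - 1) ∈ freeCells N B) (hcover : ∀ p ∈ freeCells N B, p ∈ w.support) :
    IsEvasionTour N B w.length w.getVert := by
  have hmem : ∀ j ≤ w.length, w.getVert j ∈ freeCells N B := by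
    intro j hj
    rcases hj.lt_or_eq with hj | rfl
    · exact (w.adj_getVert_succ hj).1
    · rwa [w.getVert_length]
  refine ⟨w.getVert_zero, w.getVert_length, fun j hj => (hmem j hj).1,
    fun j hj => (hmem j hj).2, fun p hp hB => ?_, fun j hj b hb => ?_⟩
  · obtain ⟨j, hj, hjm⟩ := SimpleGraph.Walk.mem_support_iff_exists_getVert.mp (hcover p ⟨hp, hB⟩)
    exact ⟨j, hjm, hj⟩
  · obtain ⟨hu, hv, hstep⟩ := w.adj_getVert_succ hj
    exact segAvoidsCell_of_king (by linarith [abs_nonneg ((w.getVert j).2 - (w.getVert (j + 1)).2)])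
      (by linarith [abs_nonneg ((w.getVert j).1 - (w.getVert (j + 1)).1)]) (hu.2 b hb) (hv.2 b hb)

theorem freeCells_pair (N n₁ n₂ : ℕ) :
    freeCells N {n₁, n₂} = box (2 ^ N) \ {hilbert N n₁, hilbert N n₂} := by
  ext p
  simp only [freeCells, InGrid, box, mem_ofPred_eq, mem_sdiff, mem_prod, mem_Icc, mem_insert_iff,
    mem_singleton_iff, Finset.mem_insert, Finset.mem_singleton, forall_eq_or_imp, forall_eq]
  tauto

theorem hilbert_evade_two_blocked_corners (N n1 n2 : ℕ) (hN : 2 ≤ N)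
    (h1 : 1 ≤ n1) (hn2 : n2 = n1 + 3) (h2 : n2 ≤ 4 ^ N - 2) (hmod : n1 % 4 = 0) :
    ∃ (m : ℕ) (w : ℕ → ℤ × ℤ), IsEvasionTour N {n1, n2} m w := by
  have hcd : (hilbert N n1).1 = (hilbert N n2).1 ∨ (hilbert N n1).2 = (hilbert N n2).2 := by
    obtain ⟨k, rfl⟩ : ∃ k, n1 = 4 * k := ⟨n1 / 4, by omega⟩
    exact hn2 ▸ hilbert_corner_collinear N k (by omega)
  have hn : (3 : ℤ) ≤ 2 ^ N := le_trans (by norm_num) (pow_le_pow_right₀ (by norm_num) hN)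
  have hconn : ∀ p ∈ freeCells N {n1, n2}, ∀ q ∈ freeCells N {n1, n2},
      (gridGraphOn (freeCells N {n1, n2})).Reachable p q := by
    rw [freeCells_pair]
    exact fun p hp q hq => gridGraphOn_box_diff_pair_reachable hn hcd hp hq
  have hfree : ∀ i < 4 ^ N, i ≠ n1 → i ≠ n2 → hilbert N i ∈ freeCells N {n1, n2} := by
    refine fun i hi hi1 hi2 => ⟨inGrid_hilbert N i, ?_⟩
    simp only [Finset.mem_insert, Finset.mem_singleton, forall_eq_or_imp, forall_eq]
    exact ⟨fun h => hi1 (hilbert_injOn N hi (by simp; omega) h),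
      fun h => hi2 (hilbert_injOn N hi (by simp; omega) h)⟩
  have hstart := hfree 0 (by positivity) (by omega) (by omega)
  have hend := hfree (4 ^ N - 1) (by simp) (by omega) (by omega)
  have hfin : (freeCells N {n1, n2}).Finite := by
    rw [freeCells_pair]
    exact ((finite_Icc _ _).prod (finite_Icc _ _)).subset sdiff_subset
  obtain ⟨w, hw⟩ := SimpleGraph.exists_walk_forall_mem_support hfin
    (hconn _ hstart _ hend) (hconn _ hstart)
  exact ⟨_, _, isEvasionTour_of_walk w hend hw⟩
end
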